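/- In the sum-intersection setting, for each A ∈ S_L: (i) r_A and β^A are, respectively, the optimal value and the optimal solution of: maximize over θ ∈ ℝ^d the quantity min_{1≤ℓ≤L} (1/ℓ) Σ_{i=L−ℓ+1}^d |θ|_{(i)}, subject to Λ(θ) ≤ 0, θ_k ≥ 0 for k ∈ A, and θ_{k'} ≤ 0 for k' ∉ A, where |θ|_{(1)} ≥ … ≥ |θ|_{(d)} is the decreasing rearrangement of (|θ_1|, …, |θ_d|). (ii) For each γ ∈ ℝ^d with Λ(γ) ≤ 0, v_A(γ) is bounded below by the optimal value of the same maximization with the constraint Λ(θ) ≤ 0 replaced by Λ(θ − γ) ≤ 0. -/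

import Mathlib

open MeasureTheory ProbabilityTheory Filter Set Topology
open scoped ENNReal Pointwise RealInnerProductSpace Classical

noncomputable section

namespace Paper

abbrev Vec (d : ℕ) := EuclideanSpace ℝ (Fin d)

variable {d : ℕ}

/-- The cone generated by a set: `{λ x : λ > 0, x ∈ A}`. -/
def cone (A : Set (Vec d)) : Set (Vec d) := {y | ∃ l : ℝ, 0 < l ∧ ∃ x ∈ A, y = l • x}

variable {Ω : Type*} [MeasurableSpace Ω]

/-- The random walk `S_n = X_0 + ⋯ + X_{n-1}`. -/
def S (X : ℕ → Ω → Vec d) (n : ℕ) (ω : Ω) : Vec d := ∑ i ∈ Finset.range n, X i ω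

/-- The cumulant generating function `Λ(θ) = log E[exp⟪θ, X₁⟫]` (real-valued on its domain). -/
def cgf (P : Measure Ω) (X : ℕ → Ω → Vec d) (θ : Vec d) : ℝ :=
  Real.log (∫ ω, Real.exp ⟪θ, X 0 ω⟫ ∂P)

/-- `θ` belongs to the effective domain of `Λ`. -/
def InDom (P : Measure Ω) (X : ℕ → Ω → Vec d) (θ : Vec d) : Prop :=
  Integrable (fun ω => Real.exp ⟪θ, X 0 ω⟫) P

/-- The effective domain of the Legendre–Fenchel conjugate `Λ*`. -/
def domConj (P : Measure Ω) (X : ℕ → Ω → Vec d) : Set (Vec d) :=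
  {x | BddAbove ((fun θ => ⟪θ, x⟫ - cgf P X θ) '' {θ | InDom P X θ})}

/-- The rate function `I(x) = sup{θ·x : Λ(θ) ≤ 0}`, valued in `[0,∞]`. -/
def rate (P : Measure Ω) (X : ℕ → Ω → Vec d) (x : Vec d) : ℝ≥0∞ :=
  ⨆ θ ∈ {θ : Vec d | InDom P X θ ∧ cgf P X θ ≤ 0}, ENNReal.ofReal ⟪θ, x⟫

/-- `r_W = inf_{x ∈ W} I(x)`. -/
def rOf (P : Measure Ω) (X : ℕ → Ω → Vec d) (W : Set (Vec d)) : ℝ≥0∞ :=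
  ⨅ x ∈ W, rate P X x

/-- The first hitting time of `b • W` by the random walk. -/
def hit (X : ℕ → Ω → Vec d) (W : Set (Vec d)) (b : ℝ) (ω : Ω) : ℕ∞ :=
  ⨅ (n : ℕ) (_ : S X n ω ∈ b • W), (n : ℕ∞)

/-- The basic i.i.d. random walk hypotheses. -/
def IIDWalk (P : Measure Ω) (X : ℕ → Ω → Vec d) : Prop :=
  IsProbabilityMeasure P ∧ (∀ n, Measurable (X n)) ∧
    iIndepFun X P ∧ ∀ n, P.map (X n) = P.map (X 0)

/-- The exponentially tilted step distribution `μ_θ`. -/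
def tiltedLaw (P : Measure Ω) (X : ℕ → Ω → Vec d) (θ : Vec d) : Measure (Vec d) :=
  (P.map (X 0)).withDensity fun x => ENNReal.ofReal (Real.exp (⟪θ, x⟫ - cgf P X θ))

/-- `Q θ` is, for each `θ ∈ dom Λ`, a probability measure under which the increments
are i.i.d. with the tilted law `μ_θ`, i.e. `Q θ = ℙ_θ`. -/
def IsTiltedFamily (P : Measure Ω) (X : ℕ → Ω → Vec d) (Q : Vec d → Measure Ω) : Prop :=
  ∀ θ : Vec d, InDom P X θ →
    IsProbabilityMeasure (Q θ) ∧
    iIndepFun X (Q θ) ∧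
    ∀ n, (Q θ).map (X n) = tiltedLaw P X θ

/-- The likelihood ratio `L_θ(T) = exp(θ·S_T − T Λ(θ)) 1{T < ∞}`. -/
def LR (P : Measure Ω) (X : ℕ → Ω → Vec d) (θ : Vec d) (T : Ω → ℕ∞) (ω : Ω) : ℝ :=
  if T ω = ⊤ then 0
  else Real.exp (⟪θ, S X (T ω).toNat ω⟫ - ((T ω).toNat : ℝ) * cgf P X θ)

/-- `V_θ(x) = sup{α·x : Λ(θ) + Λ(α−θ) ≤ 0}`, with `sup ∅ = −∞`. -/
def Vfun (P : Measure Ω) (X : ℕ → Ω → Vec d) (θ x : Vec d) : EReal :=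
  ⨆ α ∈ {α : Vec d | InDom P X θ ∧ InDom P X (α - θ) ∧ cgf P X θ + cgf P X (α - θ) ≤ 0},
    ((⟪α, x⟫ : ℝ) : EReal)

/-- `v(W; θ) = inf_{x ∈ cl W} V_θ(x)`. -/
def vOf (P : Measure Ω) (X : ℕ → Ω → Vec d) (W : Set (Vec d)) (θ : Vec d) : EReal :=
  ⨅ x ∈ closure W, Vfun P X θ x

/-- The mixture measure `ℙ_Θ = |Θ|⁻¹ ∑_{θ∈Θ} ℙ_θ`. -/
def mix (Q : Vec d → Measure Ω) (Θ : Finset (Vec d)) : Measure Ω :=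
  (Θ.card : ℝ≥0∞)⁻¹ • ∑ θ ∈ Θ, Q θ

/-- Second moment `E_μ[f²]`. -/
def mom2 (μ : Measure Ω) (f : Ω → ℝ) : ℝ :=
  (∫⁻ ω, ENNReal.ofReal ((f ω) ^ 2) ∂μ).toReal

variable {J : ℕ}

/-- `τ_b^* = min_{j ∈ [J]} τ_b^j`. -/
def tauStar (X : ℕ → Ω → Vec d) (W : Fin J → Set (Vec d)) (b : ℝ) (ω : Ω) : ℕ∞ :=
  ⨅ j, hit X (W j) b ω

/-- The wrong-exit event `{τ_b^* < τ_b^0}`. -/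
def wrongExit (X : ℕ → Ω → Vec d) (W0 : Set (Vec d)) (W : Fin J → Set (Vec d)) (b : ℝ) :
    Set Ω :=
  {ω | tauStar X W b ω < hit X W0 b ω}

/-- The event `{τ_b^* = τ_b^j}`. -/
def exitAt (X : ℕ → Ω → Vec d) (W : Fin J → Set (Vec d)) (j : Fin J) (b : ℝ) : Set Ω :=
  {ω | tauStar X W b ω = hit X (W j) b ω}

/-- The estimator `Ŵ_b^j(θ)`. -/
def WhatJ (P : Measure Ω) (X : ℕ → Ω → Vec d) (W0 : Set (Vec d)) (W : Fin J → Set (Vec d))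
    (θ : Vec d) (j : Fin J) (b : ℝ) : Ω → ℝ :=
  Set.indicator (wrongExit X W0 W b ∩ exitAt X W j b)
    (fun ω => (LR P X θ (tauStar X W b) ω)⁻¹)

/-- The mixture estimator `Ŵ_b(Θ)`. -/
def WhatMix (P : Measure Ω) (X : ℕ → Ω → Vec d) (W0 : Set (Vec d)) (W : Fin J → Set (Vec d))
    (Θ : Finset (Vec d)) (b : ℝ) : Ω → ℝ :=
  Set.indicator (wrongExit X W0 W b)
    (fun ω => ((Θ.card : ℝ)⁻¹ * ∑ θ ∈ Θ, LR P X θ (tauStar X W b) ω)⁻¹)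

/-- Asymptotic efficiency of the proposal `ℙ_Θ` for estimating `ℙ(τ_b^* < τ_b^0)`. -/
def AsympEff (P : Measure Ω) (X : ℕ → Ω → Vec d) (W0 : Set (Vec d))
    (W : Fin J → Set (Vec d)) (Q : Vec d → Measure Ω) (Θ : Finset (Vec d)) : Prop :=
  Tendsto (fun b : ℝ =>
      Real.log (mom2 (mix Q Θ) (WhatMix P X W0 W Θ b)) /
        (2 * Real.log ((P (wrongExit X W0 W b)).toReal)))
    atTop (nhds 1)

/-- Condition (C1). -/
def C1 (P : Measure Ω) (X : ℕ → Ω → Vec d) (W : Fin J → Set (Vec d)) : Prop :=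
  ∃ δ > (0 : ℝ), ∀ j, cone (Metric.ball (∫ ω, X 0 ω ∂P) δ) ∩ W j = ∅

/-- Condition (C2). -/
def C2 (P : Measure Ω) (X : ℕ → Ω → Vec d) (W : Fin J → Set (Vec d)) : Prop :=
  IsOpen {θ : Vec d | InDom P X θ} ∧
    ∀ j, (interior (cone (domConj P X)) ∩ W j).Nonempty

/-- Condition (C3). -/
def C3 (W0 : Set (Vec d)) (W : Fin J → Set (Vec d)) : Prop :=
  (∀ j j', j ≠ j' → cone (W j) ∩ cone (W j') = ∅) ∧
  (∀ j, cone W0 ∩ cone (W j) = ∅) ∧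
  ∃ δ > (0 : ℝ), Metric.ball (0 : Vec d) δ ∩ W0 = ∅ ∧
    ∀ j, Metric.ball (0 : Vec d) δ ∩ W j = ∅

/-- Condition (C4). -/
def C4 (P : Measure Ω) (X : ℕ → Ω → Vec d) (W0 : Set (Vec d))
    (W : Fin J → Set (Vec d)) : Prop :=
  (∀ j j', j ≠ j' → closure (cone (W j)) ∩ closure (cone (W j')) = {0}) ∧
  (W0 = ∅ ∨ ∀ j, closure (cone W0) ∩ closure (cone (W j)) = {0}) ∧
  (W0 = ∅ ∨ (Convex ℝ W0 ∧ (interior (cone (domConj P X)) ∩ W0).Nonempty))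

/-- The sets `W^0, W^1, …, W^J` are open and pairwise disjoint, with `W^1, …, W^J` convex. -/
def GoodSets (W0 : Set (Vec d)) (W : Fin J → Set (Vec d)) : Prop :=
  IsOpen W0 ∧ (∀ j, IsOpen (W j)) ∧ (∀ j, Convex ℝ (W j)) ∧
  (∀ j, Disjoint W0 (W j)) ∧ ∀ j j', j ≠ j' → Disjoint (W j) (W j')

/-- `β` is the optimal tilting associated with the region `Wj` (Definition 3.1). -/
def IsOptTilt (P : Measure Ω) (X : ℕ → Ω → Vec d) (Wj : Set (Vec d)) (β : Vec d) : Prop :=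
  InDom P X β ∧ cgf P X β = 0 ∧
  (∀ v ∈ Wj, ((rOf P X Wj : ℝ≥0∞) : EReal) ≤ ((⟪β, v⟫ : ℝ) : EReal)) ∧
  (∀ x : Vec d, rate P X x ≤ rOf P X Wj →
    ((⟪β, x⟫ : ℝ) : EReal) ≤ ((rOf P X Wj : ℝ≥0∞) : EReal))

/-! ### The sum-intersection rule -/

/-- The increasing rearrangement of `(|θ_1|, …, |θ_d|)`; `sortedAbs θ i` is the
`(i+1)`-th smallest of the absolute values of the coordinates of `θ`. -/
def sortedAbs (θ : Vec d) : Fin d → ℝ :=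
  (fun j => |θ j|) ∘ Tuple.sort (fun j => |θ j|)

/-- The sum of the `c` smallest absolute values of the coordinates of `θ`. -/
def lowSum (θ : Vec d) (c : ℕ) : ℝ :=
  ∑ j : Fin d, if (j : ℕ) < c then sortedAbs θ j else 0

/-- `Σ_{i=a}^{b} |θ|_{(i)}`, where `|θ|_{(1)} ≥ … ≥ |θ|_{(d)}` is the decreasing
rearrangement of the absolute values of the coordinates (1-indexed). -/
def rangeSumAbs (θ : Vec d) (a b : ℕ) : ℝ :=
  lowSum θ (d - a + 1) - lowSum θ (d - b)

/-- The objective `min_{1 ≤ ℓ ≤ L} (1/ℓ) Σ_{i=L-ℓ+1}^{top} |θ|_{(i)}`. -/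
def objSI (L top : ℕ) (θ : Vec d) : ℝ :=
  sInf {y : ℝ | ∃ l : ℕ, 1 ≤ l ∧ l ≤ L ∧ y = (l : ℝ)⁻¹ * rangeSumAbs θ (L - l + 1) top}

/-- The region `W^A` of the sum-intersection rule. -/
def WSI (L : ℕ) (A : Finset (Fin d)) : Set (Vec d) :=
  {x | (∀ k ∈ A, 0 < x k) ∧ (∀ k ∉ A, x k < 0) ∧
    ∀ B : Finset (Fin d), B.card = L → 1 < ∑ k ∈ B, |x k|}

/-- The set `W^0 = ∪_{A ∉ S_L} W^A` of the sum-intersection rule. -/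
def WSI0 (L : ℕ) : Set (Vec d) :=
  ⋃ (A : Finset (Fin d)) (_ : A.card < L), WSI L A

/-- `τ_b^* = min_{A ∈ S_L} τ_b^A` for the sum-intersection rule. -/
def tauSIStar (X : ℕ → Ω → Vec d) (L : ℕ) (b : ℝ) (ω : Ω) : ℕ∞ :=
  ⨅ (A : Finset (Fin d)) (_ : L ≤ A.card), hit X (WSI L A) b ω

/-- The wrong-exit event `{τ_b^* < τ_b^0}` for the sum-intersection rule. -/
def wrongExitSI (X : ℕ → Ω → Vec d) (L : ℕ) (b : ℝ) : Set Ω :=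
  {ω | tauSIStar X L b ω < hit X (WSI0 L) b ω}

/-- The mixture estimator `Ŵ_b(Θ)` for the sum-intersection rule. -/
def WhatSI (P : Measure Ω) (X : ℕ → Ω → Vec d) (L : ℕ) (Θ : Finset (Vec d)) (b : ℝ) :
    Ω → ℝ :=
  Set.indicator (wrongExitSI X L b)
    (fun ω => ((Θ.card : ℝ)⁻¹ * ∑ θ ∈ Θ, LR P X θ (tauSIStar X L b) ω)⁻¹)

/-- Asymptotic efficiency of `ℙ_Θ` for the sum-intersection rule. -/
def AsympEffSI (P : Measure Ω) (X : ℕ → Ω → Vec d) (L : ℕ) (Q : Vec d → Measure Ω)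
    (Θ : Finset (Vec d)) : Prop :=
  Tendsto (fun b : ℝ =>
      Real.log (mom2 (mix Q Θ) (WhatSI P X L Θ b)) /
        (2 * Real.log ((P (wrongExitSI X L b)).toReal)))
    atTop (nhds 1)

/-- The standing assumptions for the sum-intersection rule. -/
def SISetting (P : Measure Ω) (X : ℕ → Ω → Vec d) (L : ℕ) : Prop :=
  IIDWalk P X ∧ 2 ≤ L ∧ L + 1 ≤ d ∧
  (∀ k : Fin d, ∫ ω, X 0 ω k ∂P < 0) ∧
  IsOpen {θ : Vec d | InDom P X θ} ∧
  ∀ A : Finset (Fin d), L ≤ A.card →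
    (interior (cone (domConj P X)) ∩ WSI L A).Nonempty

/-- The feasible set of the optimization problem characterizing `r_A` and `β^A` for the
sum-intersection rule. -/
def SIFeas (P : Measure Ω) (X : ℕ → Ω → Vec d) (A : Finset (Fin d)) (θ : Vec d) : Prop :=
  InDom P X θ ∧ cgf P X θ ≤ 0 ∧ (∀ k ∈ A, 0 ≤ θ k) ∧ ∀ k ∉ A, θ k ≤ 0

/-- The feasible set of the problem defining `z_A` and `γ^A` (support in `A`). -/
def SIFeasSupp (P : Measure Ω) (X : ℕ → Ω → Vec d) (A : Finset (Fin d)) (θ : Vec d) :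
    Prop :=
  InDom P X θ ∧ cgf P X θ ≤ 0 ∧ (∀ k ∈ A, 0 ≤ θ k) ∧ ∀ k ∉ A, θ k = 0

/-- `zv` and `γ` are the optimal value and a maximizer of `max |θ|_{(L)}` over
`SIFeasSupp A` (for `A` of cardinality `L`). -/
def IsSIOptL (P : Measure Ω) (X : ℕ → Ω → Vec d) (L : ℕ) (A : Finset (Fin d))
    (zv : ℝ) (γ : Vec d) : Prop :=
  SIFeasSupp P X A γ ∧ rangeSumAbs γ L L = zv ∧
    ∀ θ, SIFeasSupp P X A θ → rangeSumAbs θ L L ≤ zv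

/-- `sv` is the optimal value of `max min_{1≤ℓ≤L} (1/ℓ) Σ_{i=L-ℓ+1}^{L+1} |θ|_{(i)}` over
`SIFeasSupp B` (for `B` of cardinality `L+1`). -/
def IsSIOptL1 (P : Measure Ω) (X : ℕ → Ω → Vec d) (L : ℕ) (B : Finset (Fin d))
    (sv : ℝ) : Prop :=
  (∃ γ, SIFeasSupp P X B γ ∧ objSI L (L + 1) γ = sv) ∧
    ∀ θ, SIFeasSupp P X B θ → objSI L (L + 1) θ ≤ sv

/-- `r_* = min_{A ∈ S_L} r_A`. -/
def rStarSI (P : Measure Ω) (X : ℕ → Ω → Vec d) (L : ℕ) : ℝ≥0∞ :=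
  ⨅ (A : Finset (Fin d)) (_ : L ≤ A.card), rOf P X (WSI L A)

/-!
For `θ` and `x` in the same closed orthant, `⟪θ, x⟫ = ∑ |θ_k| |x_k|`, and `objSI L d θ` is the
value of the linear program "minimise `∑ |θ_k| w_k` over `w ≥ 0` all of whose `L`-subset sums are
at least `1`". The lower bound follows by sorting `|θ|` increasingly and `w` decreasingly
(rearrangement inequality) and summing by parts; the minimum is attained by putting weight `1/l`
on the `d - L + l` smallest `|θ_k|`, for the minimising `l`. Since the closure of `W^A` consists
of the closed-orthant points whose `L`-subset sums of `|x_k|` are at least `1`, this gives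
`objSI θ ≤ ⟪θ, x⟫ ≤ I(x)` for feasible `θ` and `objSI θ ≤ V_γ(x)` on `cl W^A`. Conversely the
supporting inequality `r_A ≤ ⟪β^A, v⟫` on `W^A` forces `β^A` into the orthant of `A` (push `v`
outwards along one coordinate) and, at the optimal weights, yields `r_A ≤ objSI β^A`.
-/

theorem mul_sum_range_le_sum_range_mul {c z : ℕ → ℝ} {n : ℕ}
    (hc : ∀ k ≤ n, 0 ≤ ∑ i ∈ Finset.range k, c i) (hz : ∀ i < n, z (i + 1) ≤ z i) :
    z n * ∑ i ∈ Finset.range n, c i ≤ ∑ i ∈ Finset.range n, c i * z i := by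
  induction n with
  | zero => simp
  | succ n ih =>
    have ih := ih (fun k hk => hc k (by omega)) (fun i hi => hz i (by omega))
    have hsum := hc (n + 1) le_rfl
    rw [Finset.sum_range_succ] at hsum
    rw [Finset.sum_range_succ, Finset.sum_range_succ]
    calc z (n + 1) * (∑ i ∈ Finset.range n, c i + c n)
        ≤ z n * (∑ i ∈ Finset.range n, c i + c n) :=
          mul_le_mul_of_nonneg_right (hz n (by omega)) hsum
      _ = z n * ∑ i ∈ Finset.range n, c i + c n * z n := by ring
      _ ≤ _ := by linarith

theorem mul_sum_Ico_le_sum_range_mul {a z : ℕ → ℝ} {K n : ℕ} {m : ℝ} (ha : ∀ i, 0 ≤ a i)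
    (hz : ∀ i < n, z (i + 1) ≤ z i) (hzn : 0 ≤ z n)
    (hm : ∀ l, K + l ≤ n → l * m ≤ ∑ i ∈ Finset.range (K + l), a i) :
    m * ∑ i ∈ Finset.Ico K n, z i ≤ ∑ i ∈ Finset.range n, a i * z i := by
  have hfilter : ∀ k, (Finset.range k).filter (K ≤ ·) = Finset.Ico K k := fun k => by
    rw [Finset.range_eq_Ico, Finset.Ico_filter_le, Nat.zero_max]
  have hshift : ∀ k, ∑ i ∈ Finset.range k, (if K ≤ i then m else 0) = (k - K : ℕ) * m := by
    intro k
    rw [← Finset.sum_filter, hfilter, Finset.sum_const, Nat.card_Ico, nsmul_eq_mul]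
  set c : ℕ → ℝ := fun i => a i - if K ≤ i then m else 0
  have hc : ∀ k ≤ n, 0 ≤ ∑ i ∈ Finset.range k, c i := by
    intro k hk
    simp only [c, Finset.sum_sub_distrib, hshift, sub_nonneg]
    rcases le_or_gt k K with hkK | hKk
    · rw [Nat.sub_eq_zero_of_le hkK, Nat.cast_zero, zero_mul]
      exact Finset.sum_nonneg fun i _ => ha i
    · simpa [Nat.add_sub_cancel' hKk.le] using hm (k - K) (by omega)
  have hcz : ∑ i ∈ Finset.range n, c i * z i =
      ∑ i ∈ Finset.range n, a i * z i - m * ∑ i ∈ Finset.Ico K n, z i := by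
    simp only [c, sub_mul, Finset.sum_sub_distrib, ite_mul, zero_mul, ← Finset.sum_filter,
      hfilter, Finset.mul_sum]
  linarith [mul_nonneg hzn (hc n le_rfl), mul_sum_range_le_sum_range_mul hc hz]

theorem nonneg_of_forall_le_add_mul {a b c : ℝ} (h : ∀ t, 0 ≤ t → c ≤ a + t * b) : 0 ≤ b := by
  by_contra! hb
  have ht := h ((|a - c| + 1) / -b) (div_nonneg (by positivity) (by linarith))
  have hcancel : (|a - c| + 1) / -b * b = -(|a - c| + 1) := by
    rw [div_neg, neg_mul, div_mul_cancel₀ _ hb.ne]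
  linarith [le_abs_self (a - c)]

theorem sortedAbs_nonneg (θ : Vec d) (i : Fin d) : 0 ≤ sortedAbs θ i := abs_nonneg _

theorem rangeSumAbs_sub_add_one_eq_lowSum (θ : Vec d) {l L : ℕ} (hl : 1 ≤ l) (hlL : l ≤ L)
    (hLd : L ≤ d) :
    rangeSumAbs θ (L - l + 1) d = lowSum θ (d - L + l) := by
  simp [rangeSumAbs, lowSum, show d - (L - l + 1) + 1 = d - L + l by omega]

theorem lowSum_nonneg (θ : Vec d) (c : ℕ) : 0 ≤ lowSum θ c :=
  Finset.sum_nonneg fun j _ => by split_ifs <;> simp [sortedAbs_nonneg]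

theorem objSI_nonneg (L : ℕ) (hLd : L ≤ d) (θ : Vec d) : 0 ≤ objSI L d θ := by
  refine Real.sInf_nonneg ?_
  rintro y ⟨l, hl, hlL, rfl⟩
  rw [rangeSumAbs_sub_add_one_eq_lowSum θ hl hlL hLd]
  exact mul_nonneg (by positivity) (lowSum_nonneg θ _)

theorem objSI_le_inv_mul_lowSum {L l : ℕ} (hl : 1 ≤ l) (hlL : l ≤ L) (hLd : L ≤ d) (θ : Vec d) :
    objSI L d θ ≤ (l : ℝ)⁻¹ * lowSum θ (d - L + l) := by
  rw [← rangeSumAbs_sub_add_one_eq_lowSum θ hl hlL hLd]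
  refine csInf_le ⟨0, ?_⟩ ⟨l, hl, hlL, rfl⟩
  rintro y ⟨l', hl', hlL', rfl⟩
  rw [rangeSumAbs_sub_add_one_eq_lowSum θ hl' hlL' hLd]
  exact mul_nonneg (by positivity) (lowSum_nonneg θ _)

theorem exists_objSI_eq_inv_mul_lowSum {L : ℕ} (hL : 1 ≤ L) (hLd : L ≤ d) (θ : Vec d) :
    ∃ l, 1 ≤ l ∧ l ≤ L ∧ objSI L d θ = (l : ℝ)⁻¹ * lowSum θ (d - L + l) := by
  set S := {y : ℝ | ∃ l : ℕ, 1 ≤ l ∧ l ≤ L ∧ y = (l : ℝ)⁻¹ * rangeSumAbs θ (L - l + 1) d}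
  have hfin : S.Finite := by
    refine ((Finset.Icc 1 L).finite_toSet.image
      fun l : ℕ => (l : ℝ)⁻¹ * rangeSumAbs θ (L - l + 1) d).subset ?_
    rintro y ⟨l, hl, hlL, rfl⟩
    exact ⟨l, Finset.mem_Icc.2 ⟨hl, hlL⟩, rfl⟩
  have hne : S.Nonempty := ⟨_, 1, le_rfl, hL, rfl⟩
  obtain ⟨l, hl, hlL, hy⟩ := hne.csInf_mem hfin
  exact ⟨l, hl, hlL, by rw [objSI, hy, rangeSumAbs_sub_add_one_eq_lowSum θ hl hlL hLd]⟩

theorem sum_ite_fin_eq_sum_filter_range {M : Type*} [AddCommMonoid M] {n : ℕ} (f : Fin n → M)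
    (p : ℕ → Prop)
    [DecidablePred p] :
    ∑ i : Fin n, (if p i then f i else 0) =
      ∑ i ∈ (Finset.range n).filter p, if h : i < n then f ⟨i, h⟩ else 0 := by
  rw [Finset.sum_filter, Finset.sum_fin_eq_sum_range]
  refine Finset.sum_congr rfl fun i hi => ?_
  simp [Finset.mem_range.1 hi]

theorem card_filter_sub_le_val {L : ℕ} (hLd : L ≤ d) :
    (Finset.univ.filter fun i : Fin d => d - L ≤ (i : ℕ)).card = L := by
  have := Finset.card_filter_add_card_filter_not (s := Finset.univ)
    (p := fun i : Fin d => (i : ℕ) < d - L)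
  simp only [Fin.card_filter_val_lt, not_lt, Finset.card_univ, Fintype.card_fin] at this
  omega

theorem objSI_le_sum_sortedAbs_mul {L : ℕ} (hLd : L ≤ d) (θ : Vec d) {z : Fin d → ℝ}
    (hz : Antitone z) (hz0 : 0 ≤ z)
    (hzL : 1 ≤ ∑ i : Fin d, if d - L ≤ (i : ℕ) then z i else 0) :
    objSI L d θ ≤ ∑ i, sortedAbs θ i * z i := by
  set a' : ℕ → ℝ := fun n => if h : n < d then sortedAbs θ ⟨n, h⟩ else 0
  set z' : ℕ → ℝ := fun n => if h : n < d then z ⟨n, h⟩ else 0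
  have hlowSum : ∀ c ≤ d, lowSum θ c = ∑ i ∈ Finset.range c, a' i := by
    intro c hc
    rw [lowSum, sum_ite_fin_eq_sum_filter_range _ (· < c), Finset.range_eq_Ico,
      Finset.Ico_filter_lt, min_eq_right hc, ← Finset.range_eq_Ico]
  have hsum : ∑ i, sortedAbs θ i * z i = ∑ i ∈ Finset.range d, a' i * z' i := by
    rw [Finset.sum_fin_eq_sum_range]
    refine Finset.sum_congr rfl fun i hi => ?_
    simp [a', z', Finset.mem_range.1 hi]
  have hIco : 1 ≤ ∑ i ∈ Finset.Ico (d - L) d, z' i := by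
    rwa [sum_ite_fin_eq_sum_filter_range _ (d - L ≤ ·), Finset.range_eq_Ico,
      Finset.Ico_filter_le, Nat.zero_max] at hzL
  have key : objSI L d θ * ∑ i ∈ Finset.Ico (d - L) d, z' i ≤ ∑ i, sortedAbs θ i * z i := by
    rw [hsum]
    refine mul_sum_Ico_le_sum_range_mul (fun n => ?_) (fun n hn => ?_) (by simp [z']) ?_
    · simp only [a']; split_ifs <;> simp [sortedAbs_nonneg]
    · simp only [z', dif_pos hn]
      split_ifs with h
      · exact hz (Fin.mk_le_mk.2 n.le_succ)
      · exact hz0 _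
    · intro l hl
      rcases Nat.eq_zero_or_pos l with rfl | hl0
      · simpa using lowSum_nonneg θ (d - L) |>.trans_eq (hlowSum _ (by omega))
      · rw [← hlowSum _ hl, ← le_inv_mul_iff₀ (by positivity)]
        exact objSI_le_inv_mul_lowSum hl0 (by omega) hLd θ
  exact (le_mul_of_one_le_right (objSI_nonneg L hLd θ) hIco).trans key

theorem objSI_le_sum_abs_mul {L : ℕ} (hLd : L ≤ d) (θ : Vec d) {w : Fin d → ℝ} (hw0 : 0 ≤ w)
    (hw : ∀ B : Finset (Fin d), B.card = L → 1 ≤ ∑ k ∈ B, w k) :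
    objSI L d θ ≤ ∑ k, |θ k| * w k := by
  set σ := Tuple.sort fun k => |θ k|
  set τ := Tuple.sort (w ∘ σ)
  set z : Fin d → ℝ := fun i => w (σ (τ i.rev))
  have hz : Antitone z := fun i j hij => Tuple.monotone_sort (w ∘ σ) (Fin.rev_le_rev.2 hij)
  have hzL : 1 ≤ ∑ i : Fin d, if d - L ≤ (i : ℕ) then z i else 0 := by
    rw [← Finset.sum_filter]
    have := hw (Finset.map (Fin.revPerm.trans (τ.trans σ)).toEmbedding _)
      (by rw [Finset.card_map, card_filter_sub_le_val hLd])
    rwa [Finset.sum_map] at this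
  calc objSI L d θ ≤ ∑ i, sortedAbs θ i * z i :=
        objSI_le_sum_sortedAbs_mul hLd θ hz (fun i => hw0 (σ (τ i.rev))) hzL
    _ ≤ ∑ i, sortedAbs θ i * z ((τ.symm.trans Fin.revPerm) i) :=
        ((Tuple.monotone_sort _).antivary hz).sum_mul_le_sum_mul_comp_perm
    _ = ∑ i, |θ (σ i)| * w (σ i) := by simp [z, sortedAbs, σ]
    _ = ∑ k, |θ k| * w k := Equiv.sum_comp σ fun k => |θ k| * w k

theorem exists_sum_abs_mul_eq_objSI {L : ℕ} (hL : 1 ≤ L) (hLd : L ≤ d) (θ : Vec d) :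
    ∃ w : Fin d → ℝ, 0 ≤ w ∧ (∀ B : Finset (Fin d), B.card = L → 1 ≤ ∑ k ∈ B, w k) ∧
      ∑ k, |θ k| * w k = objSI L d θ := by
  obtain ⟨l, hl, hlL, hobj⟩ := exists_objSI_eq_inv_mul_lowSum hL hLd θ
  set σ := Tuple.sort fun k => |θ k|
  set S := (Finset.univ.filter fun i : Fin d => (i : ℕ) < d - L + l).map σ.toEmbedding
  have hS : S.card = d - L + l := by rw [Finset.card_map, Fin.card_filter_val_lt]; omega
  have hl0 : (0 : ℝ) < l := by exact_mod_cast hl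
  refine ⟨fun k => if k ∈ S then (l : ℝ)⁻¹ else 0, fun k => by dsimp only; positivity,
    fun B hB => ?_, ?_⟩
  · have hBS : l ≤ (B ∩ S).card := by
      have := Finset.card_union_add_card_inter B S
      have := (B ∪ S).card_le_univ
      rw [Fintype.card_fin] at this
      omega
    rw [Finset.sum_ite_mem, Finset.sum_const, nsmul_eq_mul, ← div_eq_mul_inv, one_le_div hl0]
    exact_mod_cast hBS
  · simp only [mul_ite, mul_zero, Finset.sum_ite_mem, Finset.univ_inter, S, Finset.sum_map,
      ← Finset.sum_mul, hobj, lowSum, ← Finset.sum_filter]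
    exact mul_comm _ _

theorem real_inner_eq_sum_mul (θ x : Vec d) : ⟪θ, x⟫ = ∑ k, θ k * x k := by
  simp [PiLp.inner_apply, mul_comm]

section Orthant

variable {L : ℕ} {A : Finset (Fin d)}

theorem inner_eq_sum_abs_mul_abs {θ x : Vec d} (hθ : ∀ k ∈ A, 0 ≤ θ k) (hθ' : ∀ k ∉ A, θ k ≤ 0)
    (hx : ∀ k ∈ A, 0 ≤ x k) (hx' : ∀ k ∉ A, x k ≤ 0) :
    ⟪θ, x⟫ = ∑ k, |θ k| * |x k| := by
  rw [real_inner_eq_sum_mul]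
  refine Finset.sum_congr rfl fun k _ => ?_
  rw [← abs_mul, abs_of_nonneg]
  by_cases hk : k ∈ A
  · exact mul_nonneg (hθ k hk) (hx k hk)
  · exact mul_nonneg_of_nonpos_of_nonpos (hθ' k hk) (hx' k hk)

def signVec (A : Finset (Fin d)) (y : Fin d → ℝ) : Vec d :=
  WithLp.toLp 2 fun k => if k ∈ A then y k else -y k

theorem inner_signVec (θ : Vec d) (y : Fin d → ℝ) :
    ⟪θ, signVec A y⟫ = ∑ k, (if k ∈ A then θ k else -θ k) * y k := by
  rw [real_inner_eq_sum_mul]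
  refine Finset.sum_congr rfl fun k _ => ?_
  simp only [signVec]
  split_ifs <;> ring

theorem signVec_mem_WSI {y : Fin d → ℝ} (hy : ∀ k, 0 < y k)
    (hyL : ∀ B : Finset (Fin d), B.card = L → 1 < ∑ k ∈ B, y k) : signVec A y ∈ WSI L A := by
  refine ⟨fun k hk => ?_, fun k hk => ?_, fun B hB => ?_⟩
  · simpa [signVec, hk] using hy k
  · simpa [signVec, hk] using hy k
  · convert hyL B hB using 2 with k
    simp only [signVec]
    split_ifs <;> simp [abs_of_pos (hy k)]

theorem signVec_mem_closure_WSI {y : Fin d → ℝ} (hy : 0 ≤ y)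
    (hyL : ∀ B : Finset (Fin d), B.card = L → 1 ≤ ∑ k ∈ B, y k) :
    signVec A y ∈ closure (WSI L A) := by
  have hcont : Continuous fun t : ℝ => signVec A fun k => y k + t :=
    (PiLp.continuous_toLp _ _).comp (continuous_pi fun k => by split_ifs <;> fun_prop)
  have hlim : Tendsto (fun t : ℝ => signVec A fun k => y k + t) (𝓝[>] 0) (𝓝 (signVec A y)) := by
    simpa using (hcont.tendsto 0).mono_left nhdsWithin_le_nhds
  refine mem_closure_of_tendsto hlim
    (eventually_nhdsWithin_of_forall fun t (ht : (0 : ℝ) < t) => signVec_mem_WSI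
      (fun k => by simpa using add_pos_of_nonneg_of_pos (hy k) ht) fun B hB => ?_)
  obtain rfl | hB0 := B.eq_empty_or_nonempty
  · exact absurd (hyL ∅ hB) (by norm_num)
  · have := hyL B hB
    simp only [Finset.sum_add_distrib, Finset.sum_const, nsmul_eq_mul]
    nlinarith [show (0 : ℝ) < B.card by exact_mod_cast hB0.card_pos]

theorem closure_WSI_subset : closure (WSI L A) ⊆ {x | (∀ k ∈ A, 0 ≤ x k) ∧
    (∀ k ∉ A, x k ≤ 0) ∧ ∀ B : Finset (Fin d), B.card = L → 1 ≤ ∑ k ∈ B, |x k|} := by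
  intro x hx
  refine ⟨fun k hk => ?_, fun k hk => ?_, fun B hB => ?_⟩
  · exact closure_minimal (t := {y : Vec d | 0 ≤ y k}) (fun y hy => (hy.1 k hk).le)
      (isClosed_le (by fun_prop) (by fun_prop)) hx
  · exact closure_minimal (t := {y : Vec d | y k ≤ 0}) (fun y hy => (hy.2.1 k hk).le)
      (isClosed_le (by fun_prop) (by fun_prop)) hx
  · exact closure_minimal (t := {y : Vec d | 1 ≤ ∑ k ∈ B, |y k|}) (fun y hy => (hy.2.2 B hB).le)
      (isClosed_le (by fun_prop) (by fun_prop)) hx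

theorem objSI_le_inner (hLd : L ≤ d) {θ x : Vec d} (hθ : ∀ k ∈ A, 0 ≤ θ k)
    (hθ' : ∀ k ∉ A, θ k ≤ 0) (hx : x ∈ closure (WSI L A)) : objSI L d θ ≤ ⟪θ, x⟫ := by
  obtain ⟨hxA, hxA', hxL⟩ := closure_WSI_subset hx
  rw [inner_eq_sum_abs_mul_abs hθ hθ' hxA hxA']
  exact objSI_le_sum_abs_mul hLd θ (fun k => abs_nonneg (x k)) hxL

theorem inner_signVec_of_signPattern {θ : Vec d}
    (hθ : ∀ k ∈ A, 0 ≤ θ k) (hθ' : ∀ k ∉ A, θ k ≤ 0) (y : Fin d → ℝ) :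
    ⟪θ, signVec A y⟫ = ∑ k, |θ k| * y k := by
  rw [inner_signVec]
  refine Finset.sum_congr rfl fun k _ => ?_
  split_ifs with hk
  · rw [abs_of_nonneg (hθ k hk)]
  · rw [abs_of_nonpos (hθ' k hk)]

end Orthant

section Tilt

variable {P : Measure Ω} {X : ℕ → Ω → Vec d} {L : ℕ} {A : Finset (Fin d)}

theorem ofReal_inner_le_rate {θ : Vec d} (hθ : InDom P X θ) (hθ0 : cgf P X θ ≤ 0) (x : Vec d) :
    ENNReal.ofReal ⟪θ, x⟫ ≤ rate P X x :=
  le_iSup₂ (f := fun θ (_ : θ ∈ {θ : Vec d | InDom P X θ ∧ cgf P X θ ≤ 0}) =>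
    ENNReal.ofReal ⟪θ, x⟫) θ ⟨hθ, hθ0⟩

theorem coe_inner_le_Vfun {γ α : Vec d} (hγ : InDom P X γ) (hαγ : InDom P X (α - γ))
    (h : cgf P X γ + cgf P X (α - γ) ≤ 0) (x : Vec d) :
    ((⟪α, x⟫ : ℝ) : EReal) ≤ Vfun P X γ x :=
  le_iSup₂ (f := fun α (_ : α ∈ {α : Vec d | InDom P X γ ∧ InDom P X (α - γ) ∧
    cgf P X γ + cgf P X (α - γ) ≤ 0}) => ((⟪α, x⟫ : ℝ) : EReal)) α ⟨hγ, hαγ, h⟩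

theorem ofReal_objSI_le_rOf (hLd : L ≤ d) {θ : Vec d} (hθ : SIFeas P X A θ) :
    ENNReal.ofReal (objSI L d θ) ≤ rOf P X (WSI L A) :=
  le_iInf₂ fun x hx =>
    (ENNReal.ofReal_le_ofReal (objSI_le_inner hLd hθ.2.2.1 hθ.2.2.2 (subset_closure hx))).trans
      (ofReal_inner_le_rate hθ.1 hθ.2.1 x)

theorem coe_ofReal_objSI_le_vOf (hLd : L ≤ d) {γ θ : Vec d} (hγ : InDom P X γ)
    (hγ0 : cgf P X γ ≤ 0) (hθγ : InDom P X (θ - γ)) (hθγ0 : cgf P X (θ - γ) ≤ 0)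
    (hθ : ∀ k ∈ A, 0 ≤ θ k) (hθ' : ∀ k ∉ A, θ k ≤ 0) :
    ((ENNReal.ofReal (objSI L d θ) : ℝ≥0∞) : EReal) ≤ vOf P X (WSI L A) γ := by
  refine le_iInf₂ fun x hx => ?_
  rw [EReal.coe_ennreal_ofReal, max_eq_left (objSI_nonneg L hLd θ)]
  exact (EReal.coe_le_coe_iff.2 (objSI_le_inner hLd hθ hθ' hx)).trans
    (coe_inner_le_Vfun hγ hθγ (add_nonpos hγ0 hθγ0) x)

namespace IsOptTilt

variable {W : Set (Vec d)} {β : Vec d}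

theorem rOf_ne_top (h : IsOptTilt P X W β) (hW : W.Nonempty) : rOf P X W ≠ ⊤ := by
  obtain ⟨v, hv⟩ := hW
  intro htop
  simpa [htop] using h.2.2.1 v hv

theorem toReal_rOf_le_inner_of_mem_closure (h : IsOptTilt P X W β) {v : Vec d}
    (hv : v ∈ closure W) :
    (rOf P X W).toReal ≤ ⟪β, v⟫ := by
  refine closure_minimal (t := {v | (rOf P X W).toReal ≤ ⟪β, v⟫}) (fun v hv => ?_)
    (isClosed_le continuous_const (by fun_prop)) hv
  simpa using EReal.toReal_le_toReal (h.2.2.1 v hv) (EReal.coe_ennreal_ne_bot _)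
    (EReal.coe_ne_top _)

theorem signPattern (hL : 1 ≤ L) (h : IsOptTilt P X (WSI L A) β) :
    (∀ k ∈ A, 0 ≤ β k) ∧ ∀ k ∉ A, β k ≤ 0 := by
  have hsign : ∀ k, 0 ≤ if k ∈ A then β k else -β k := by
    intro k
    refine nonneg_of_forall_le_add_mul (c := (rOf P X (WSI L A)).toReal)
      (a := ∑ j, if j ∈ A then β j else -β j) fun t ht => ?_
    set y : Fin d → ℝ := fun j => 1 + if j = k then t else 0
    have hy0 : 0 ≤ y := fun j => by dsimp only [y]; positivity
    have hyL : ∀ B : Finset (Fin d), B.card = L → 1 ≤ ∑ j ∈ B, y j := fun B hB =>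
      calc (1 : ℝ) ≤ B.card := by exact_mod_cast hB ▸ hL
        _ = ∑ _j ∈ B, (1 : ℝ) := by simp
        _ ≤ ∑ j ∈ B, y j := Finset.sum_le_sum fun j _ => le_add_of_nonneg_right (by positivity)
    have := h.toReal_rOf_le_inner_of_mem_closure (signVec_mem_closure_WSI (A := A) hy0 hyL)
    simpa [inner_signVec, y, mul_add, Finset.sum_add_distrib, mul_comm t] using this
  exact ⟨fun k hk => by simpa [hk] using hsign k, fun k hk => by simpa [hk] using hsign k⟩

theorem rOf_le_ofReal_objSI (hL : 1 ≤ L) (hLd : L ≤ d) (h : IsOptTilt P X (WSI L A) β) :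
    rOf P X (WSI L A) ≤ ENNReal.ofReal (objSI L d β) := by
  obtain ⟨hβ, hβ'⟩ := h.signPattern hL
  obtain ⟨w, hw0, hwL, hw⟩ := exists_sum_abs_mul_eq_objSI hL hLd β
  have hmem := signVec_mem_closure_WSI (A := A) hw0 hwL
  rw [← ENNReal.ofReal_toReal (h.rOf_ne_top (closure_nonempty_iff.1 ⟨_, hmem⟩)), ← hw,
    ← inner_signVec_of_signPattern hβ hβ']
  exact ENNReal.ofReal_le_ofReal (h.toReal_rOf_le_inner_of_mem_closure hmem)

end IsOptTilt

end Tilt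

theorem statement14_general
    {d : ℕ} {Ω : Type*} [MeasurableSpace Ω] (P : Measure Ω) (X : ℕ → Ω → Vec d)
    (L : ℕ) (hSI : SISetting P X L)
    (A : Finset (Fin d))
    (βA : Vec d) (hβA : IsOptTilt P X (WSI L A) βA) :
    -- (i) `r_A` and `β^A` are the optimal value and an optimal solution
    ((∀ θ : Vec d, SIFeas P X A θ →
        ENNReal.ofReal (objSI L d θ) ≤ rOf P X (WSI L A)) ∧
      SIFeas P X A βA ∧
      ENNReal.ofReal (objSI L d βA) = rOf P X (WSI L A)) ∧
    -- (ii) lower bound on `v_A(γ)`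
    (∀ γ : Vec d, InDom P X γ → cgf P X γ ≤ 0 →
      ∀ θ : Vec d, InDom P X (θ - γ) → cgf P X (θ - γ) ≤ 0 →
        (∀ k ∈ A, 0 ≤ θ k) → (∀ k ∉ A, θ k ≤ 0) →
        ((ENNReal.ofReal (objSI L d θ) : ℝ≥0∞) : EReal) ≤ vOf P X (WSI L A) γ) := by
  obtain ⟨-, hL2, hLd1, -⟩ := hSI
  have hL : 1 ≤ L := by omega
  have hLd : L ≤ d := by omega
  have hfeas : SIFeas P X A βA := ⟨hβA.1, hβA.2.1.le, hβA.signPattern hL⟩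
  exact ⟨⟨fun θ hθ => ofReal_objSI_le_rOf hLd hθ, hfeas,
      (ofReal_objSI_le_rOf hLd hfeas).antisymm (hβA.rOf_le_ofReal_objSI hL hLd)⟩,
    fun γ hγ hγ0 θ hθγ hθγ0 hθ hθ' => coe_ofReal_objSI_le_vOf hLd hγ hγ0 hθγ hθγ0 hθ hθ'⟩

theorem statement14
    {d : ℕ} {Ω : Type*} [MeasurableSpace Ω] (P : Measure Ω) (X : ℕ → Ω → Vec d)
    (L : ℕ) (hSI : SISetting P X L)
    (A : Finset (Fin d)) (hA : L ≤ A.card)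
    (βA : Vec d) (hβA : IsOptTilt P X (WSI L A) βA) :
    -- (i) `r_A` and `β^A` are the optimal value and an optimal solution
    ((∀ θ : Vec d, SIFeas P X A θ →
        ENNReal.ofReal (objSI L d θ) ≤ rOf P X (WSI L A)) ∧
      SIFeas P X A βA ∧
      ENNReal.ofReal (objSI L d βA) = rOf P X (WSI L A)) ∧
    -- (ii) lower bound on `v_A(γ)`
    (∀ γ : Vec d, InDom P X γ → cgf P X γ ≤ 0 →
      ∀ θ : Vec d, InDom P X (θ - γ) → cgf P X (θ - γ) ≤ 0 →
        (∀ k ∈ A, 0 ≤ θ k) → (∀ k ∉ A, θ k ≤ 0) →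
        ((ENNReal.ofReal (objSI L d θ) : ℝ≥0∞) : EReal) ≤ vOf P X (WSI L A) γ) :=
  statement14_general P X L hSI A βA hβA

end Paper
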